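/- Let U and V be separable real Hilbert spaces and let T : U × V → ℝ be bounded below by T_inf and, for each fixed u ∈ U, differentiable in its second argument with ‖∇_v T(u, v) − ∇_v T(u, v')‖ ≤ L₂‖v − v'‖ for all v, v' (L₂ > 0 uniform in u). Let (Ω, 𝓕, μ) be a probability space, let u₀ ∈ U and v₀ ∈ V be deterministic, and let (u_t)_{t=0}^{T}, (v_t)_{t=0}^{T}, (ĝ_t)_{t=0}^{T−1} be random processes with v_{t+1} = v_t − η₂ ĝ_t, where 0 < η₂ ≤ 1/L₂. Assume for each t there is a sub-σ-algebra 𝓖_t ⊆ 𝓕 such that u_{t+1} and v_t are strongly 𝓖_t-measurable, μ[ĝ_t | 𝓖_t] = ∇_v T(u_{t+1}, v_t) a.e., μ[‖ĝ_t − ∇_v T(u_{t+1}, v_t)‖² | 𝓖_t] ≤ σ₂² a.e., and all quantities T(u_t, v_t), T(u_{t+1}, v_t), ‖∇_v T(u_{t+1}, v_t)‖², ‖ĝ_t‖² are integrable. Define Γ_T := Σ_{t=0}^{T−1} E[|T(u_{t+1}, v_t) − T(u_t, v_t)|]. Then (1/T) Σ_{t=0}^{T−1} E[‖∇_v T(u_{t+1},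 v_t)‖²] ≤ 2(T(u₀, v₀) − T_inf + Γ_T)/(η₂ T) + L₂ η₂ σ₂². -/

import Mathlib

/-!
At step `t`, the descent lemma for the `L₂`-smooth map `v ↦ T (u_{t+1}) v`, combined with
unbiasedness of `ĝ_t` (which makes `ĝ_t - ∇` orthogonal in `L²` to the `𝓖_t`-measurable gradient)
and the variance bound, gives
`E T(u_{t+1}, v_{t+1}) ≤ E T(u_{t+1}, v_t) - η₂/2 E‖∇_v T(u_{t+1}, v_t)‖² + L₂ η₂² σ₂² / 2`,
where `L₂ η₂ ≤ 1` absorbs the `L₂ η₂² ‖∇‖²` term. Replacing `E T(u_{t+1}, v_t)` by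
`E T(u_t, v_t)` costs at most the drift increment `E|T(u_{t+1}, v_t) - T(u_t, v_t)|`;
telescoping over `t < N` and `T ≥ T_inf` give the bound.
-/

open MeasureTheory

section Descent

variable {V : Type*} [NormedAddCommGroup V] [InnerProductSpace ℝ V] [CompleteSpace V]

theorem le_add_inner_gradient_add_sq_of_lipschitz_gradient {f : V → ℝ} {L : ℝ}
    (hf : Differentiable ℝ f) (hlip : ∀ a b, ‖gradient f a - gradient f b‖ ≤ L * ‖a - b‖)
    (x d : V) :
    f (x + d) ≤ f x + inner ℝ (gradient f x) d + L / 2 * ‖d‖ ^ 2 := by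
  have hderiv (t : ℝ) :
      HasDerivAt (fun s : ℝ => f (x + s • d)) (inner ℝ (gradient f (x + t • d)) d) t := by
    have hline : HasDerivAt (fun s : ℝ => x + s • d) d t := by
      simpa using ((hasDerivAt_id t).smul_const d).const_add x
    exact (hf _).hasGradientAt.hasFDerivAt.comp_hasDerivAt t hline
  have hparabola (t : ℝ) :
      HasDerivAt (fun s : ℝ => f x + s * inner ℝ (gradient f x) d + L / 2 * s ^ 2 * ‖d‖ ^ 2)
      (inner ℝ (gradient f x) d + L * t * ‖d‖ ^ 2) t := by
    have hlin := ((hasDerivAt_id' t).mul_const (inner ℝ (gradient f x) d)).const_add (f x)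
    have hquad := ((hasDerivAt_pow 2 t).const_mul (L / 2)).mul_const (‖d‖ ^ 2)
    exact (hlin.add hquad).congr_deriv (by push_cast; ring)
  have hslope : ∀ t ∈ Set.Ico (0 : ℝ) 1,
      inner ℝ (gradient f (x + t • d)) d ≤ inner ℝ (gradient f x) d + L * t * ‖d‖ ^ 2 := by
    rintro t ⟨ht, -⟩
    have := calc
      inner ℝ (gradient f (x + t • d) - gradient f x) d
          ≤ ‖gradient f (x + t • d) - gradient f x‖ * ‖d‖ := real_inner_le_norm _ _
      _ ≤ L * ‖x + t • d - x‖ * ‖d‖ := by gcongr; exact hlip _ _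
      _ = L * t * ‖d‖ ^ 2 := by
        rw [add_sub_cancel_left, norm_smul, Real.norm_of_nonneg ht]; ring
    rw [inner_sub_left] at this
    linarith
  have hfence := image_le_of_deriv_right_le_deriv_boundary
    (fun t _ => (hderiv t).continuousAt.continuousWithinAt) (fun t _ => (hderiv t).hasDerivWithinAt)
    (by simp) (fun t _ => (hparabola t).continuousAt.continuousWithinAt)
    (fun t _ => (hparabola t).hasDerivWithinAt) hslope (Set.right_mem_Icc.2 zero_le_one)
  simpa using hfence

end Descent

section ConditionalExpectation

variable {Ω V : Type*} [NormedAddCommGroup V] [InnerProductSpace ℝ V]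
  {m m0 : MeasurableSpace Ω} {μ : Measure Ω} {F G : Ω → V}

theorem MeasureTheory.MemLp.integrable_inner (hF : MemLp F 2 μ) (hG : MemLp G 2 μ) :
    Integrable (fun ω => inner ℝ (F ω) (G ω)) μ :=
  (L2.integrable_inner (𝕜 := ℝ) hF.toLp hG.toLp).congr <| by
    filter_upwards [hF.coeFn_toLp, hG.coeFn_toLp] with ω hFω hGω
    rw [hFω, hGω]

variable [CompleteSpace V] [IsFiniteMeasure μ]

/-- `F = 𝔼[G | m]` is the orthogonal projection of `G` onto the `m`-measurable part of `L²`. -/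
theorem integral_inner_eq_integral_norm_sq_of_ae_eq_condExp (hm : m ≤ m0)
    (hF : MemLp F 2 μ) (hG : MemLp G 2 μ) (hFG : F =ᵐ[μ] μ[G | m]) :
    ∫ ω, inner ℝ (F ω) (G ω) ∂μ = ∫ ω, ‖F ω‖ ^ 2 ∂μ := by
  have hF_meas : AEStronglyMeasurable[m] (hF.toLp F : Ω → V) μ :=
    ⟨μ[G | m], stronglyMeasurable_condExp, hF.coeFn_toLp.trans hFG⟩
  have hproj := inner_condExpL2_eq_inner_fun (𝕜 := ℝ) hm hG.toLp _ hF_meas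
  have hcond : (condExpL2 V ℝ hm hG.toLp : Ω → V) =ᵐ[μ] F :=
    (hG.condExpL2_ae_eq_condExp hm).trans hFG.symm
  rw [L2.inner_def, L2.inner_def] at hproj
  calc ∫ ω, inner ℝ (F ω) (G ω) ∂μ
      = ∫ ω, inner ℝ ((hG.toLp G : Ω → V) ω) ((hF.toLp F : Ω → V) ω) ∂μ := by
        refine integral_congr_ae ?_
        filter_upwards [hF.coeFn_toLp, hG.coeFn_toLp] with ω hFω hGω
        rw [hFω, hGω, real_inner_comm]
    _ = _ := hproj.symm
    _ = ∫ ω, ‖F ω‖ ^ 2 ∂μ := by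
        refine integral_congr_ae ?_
        filter_upwards [hcond, hF.coeFn_toLp] with ω hcω hFω
        rw [hcω, hFω, real_inner_self_eq_norm_sq]

theorem integral_norm_sq_eq_integral_norm_sub_sq_add_of_ae_eq_condExp (hm : m ≤ m0)
    (hF : MemLp F 2 μ) (hG : MemLp G 2 μ) (hFG : F =ᵐ[μ] μ[G | m]) :
    ∫ ω, ‖G ω‖ ^ 2 ∂μ = ∫ ω, ‖G ω - F ω‖ ^ 2 ∂μ + ∫ ω, ‖F ω‖ ^ 2 ∂μ := by
  have hsq {H : Ω → V} (hH : MemLp H 2 μ) : Integrable (fun ω => ‖H ω‖ ^ 2) μ :=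
    (memLp_two_iff_integrable_sq_norm hH.1).1 hH
  have hpt (ω : Ω) : ‖G ω - F ω‖ ^ 2
      = ‖G ω‖ ^ 2 - 2 * inner ℝ (F ω) (G ω) + ‖F ω‖ ^ 2 := by
    rw [norm_sub_sq_real, real_inner_comm]
  have hinner : Integrable (fun ω => 2 * inner ℝ (F ω) (G ω)) μ :=
    (hF.integrable_inner hG).const_mul 2
  have hdiff : Integrable (fun ω => ‖G ω‖ ^ 2 - 2 * inner ℝ (F ω) (G ω)) μ := (hsq hG).sub hinner
  simp_rw [hpt]
  rw [integral_add hdiff (hsq hF), integral_sub (hsq hG) hinner, integral_const_mul,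
    integral_inner_eq_integral_norm_sq_of_ae_eq_condExp hm hF hG hFG]
  ring

end ConditionalExpectation

section StochasticGradientStep

variable {Ω V : Type*} [NormedAddCommGroup V] [InnerProductSpace ℝ V] [CompleteSpace V]
  {m m0 : MeasurableSpace Ω} {μ : Measure Ω} [IsProbabilityMeasure μ]

theorem integral_sgd_step_le (hm : m ≤ m0) {f : Ω → V → ℝ} {L η σ : ℝ} (hL : 0 ≤ L)
    (hη : 0 ≤ η) (hLη : L * η ≤ 1) (hf : ∀ ω, Differentiable ℝ (f ω))
    (hlip : ∀ ω a b, ‖gradient (f ω) a - gradient (f ω) b‖ ≤ L * ‖a - b‖) {x g : Ω → V}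
    (hg_meas : AEStronglyMeasurable g μ)
    (hunbiased : μ[g | m] =ᵐ[μ] fun ω => gradient (f ω) (x ω))
    (hvar : ∀ᵐ ω ∂μ, μ[fun ω => ‖g ω - gradient (f ω) (x ω)‖ ^ 2 | m] ω ≤ σ ^ 2)
    (hfx : Integrable (fun ω => f ω (x ω)) μ)
    (hfx_next : Integrable (fun ω => f ω (x ω - η • g ω)) μ)
    (hgrad : Integrable (fun ω => ‖gradient (f ω) (x ω)‖ ^ 2) μ)
    (hg : Integrable (fun ω => ‖g ω‖ ^ 2) μ) :
    ∫ ω, f ω (x ω - η • g ω) ∂μ ≤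
      ∫ ω, f ω (x ω) ∂μ - η / 2 * ∫ ω, ‖gradient (f ω) (x ω)‖ ^ 2 ∂μ + L * η ^ 2 / 2 * σ ^ 2 := by
  set F : Ω → V := fun ω => gradient (f ω) (x ω)
  have hF2 : MemLp F 2 μ := (memLp_two_iff_integrable_sq_norm
    ((stronglyMeasurable_condExp.mono hm).aestronglyMeasurable.congr hunbiased)).2 hgrad
  have hg2 : MemLp g 2 μ := (memLp_two_iff_integrable_sq_norm hg_meas).2 hg
  have hnoise : ∫ ω, ‖g ω - F ω‖ ^ 2 ∂μ ≤ σ ^ 2 := by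
    rw [← integral_condExp hm]
    calc _ ≤ ∫ _, σ ^ 2 ∂μ := integral_mono_ae integrable_condExp (integrable_const _) hvar
      _ = σ ^ 2 := by simp
  have hdescent (ω : Ω) : f ω (x ω - η • g ω) ≤
      f ω (x ω) - η * inner ℝ (F ω) (g ω) + L / 2 * η ^ 2 * ‖g ω‖ ^ 2 := by
    have := le_add_inner_gradient_add_sq_of_lipschitz_gradient (hf ω) (hlip ω) (x ω) (-(η • g ω))
    rw [← sub_eq_add_neg, inner_neg_right, real_inner_smul_right, norm_neg, norm_smul,
      Real.norm_of_nonneg hη] at this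
    linear_combination this
  have hinner : Integrable (fun ω => η * inner ℝ (F ω) (g ω)) μ :=
    (hF2.integrable_inner hg2).const_mul η
  have hlinear : Integrable (fun ω => f ω (x ω) - η * inner ℝ (F ω) (g ω)) μ := hfx.sub hinner
  have hexpect : ∫ ω, f ω (x ω - η • g ω) ∂μ ≤ ∫ ω, f ω (x ω) ∂μ
      - η * ∫ ω, inner ℝ (F ω) (g ω) ∂μ + L / 2 * η ^ 2 * ∫ ω, ‖g ω‖ ^ 2 ∂μ := by
    calc _ ≤ ∫ ω, (f ω (x ω) - η * inner ℝ (F ω) (g ω) + L / 2 * η ^ 2 * ‖g ω‖ ^ 2) ∂μ :=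
          integral_mono hfx_next (hlinear.add (hg.const_mul _)) hdescent
      _ = _ := by
          rw [integral_add hlinear (hg.const_mul _), integral_sub hfx hinner,
            integral_const_mul, integral_const_mul]
  rw [integral_inner_eq_integral_norm_sq_of_ae_eq_condExp hm hF2 hg2 hunbiased.symm,
    integral_norm_sq_eq_integral_norm_sub_sq_add_of_ae_eq_condExp hm hF2 hg2 hunbiased.symm]
    at hexpect
  have hA : 0 ≤ ∫ ω, ‖F ω‖ ^ 2 ∂μ := integral_nonneg fun ω => sq_nonneg _
  nlinarith [mul_le_mul_of_nonneg_left hnoise (by positivity : 0 ≤ L * η ^ 2),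
    mul_nonneg (mul_nonneg hη hA) (sub_nonneg.2 hLη)]

end StochasticGradientStep

open Finset in
theorem average_le_of_telescoping_descent {N : ℕ} (hN : 0 < N) {η c lo : ℝ} (hη : 0 < η)
    {A I D : ℕ → ℝ} (hlo : lo ≤ I N)
    (hstep : ∀ t < N, I (t + 1) ≤ I t + D t - η / 2 * A t + η / 2 * c) :
    1 / (N : ℝ) * ∑ t ∈ range N, A t ≤ 2 * (I 0 - lo + ∑ t ∈ range N, D t) / (η * N) + c := by
  have hN' : (0 : ℝ) < N := by exact_mod_cast hN
  have hsum : η / 2 * ∑ t ∈ range N, A t ≤ I 0 - I N + ∑ t ∈ range N, D t + N * (η / 2 * c) := by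
    have := sum_le_sum fun t ht =>
      (by linarith [hstep t (mem_range.1 ht)] : η / 2 * A t ≤ I t - I (t + 1) + D t + η / 2 * c)
    rwa [← mul_sum, sum_add_distrib, sum_add_distrib, sum_range_sub', sum_const, card_range,
      nsmul_eq_mul] at this
  calc 1 / (N : ℝ) * ∑ t ∈ range N, A t = 2 / (η * N) * (η / 2 * ∑ t ∈ range N, A t) := by
        field_simp
    _ ≤ 2 / (η * N) * (I 0 - lo + ∑ t ∈ range N, D t + N * (η / 2 * c)) := by
        gcongr; linarith
    _ = _ := by field_simp

theorem lopt_task_descent_interface_drift_general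
    {U V : Type*}
    [NormedAddCommGroup V] [InnerProductSpace ℝ V]
    [CompleteSpace V]
    {Ω : Type*} {m0 : MeasurableSpace Ω}
    (μ : @MeasureTheory.Measure Ω m0) [IsProbabilityMeasure μ]
    (T : U → V → ℝ) (L₂ Tinf : ℝ) (hL₂ : 0 < L₂)
    (hdiff : ∀ u : U, Differentiable ℝ (T u))
    (hlip : ∀ (u : U) (v v' : V),
      ‖gradient (T u) v - gradient (T u) v'‖ ≤ L₂ * ‖v - v'‖)
    (hbdd : ∀ (u : U) (v : V), Tinf ≤ T u v)
    (u₀ : U) (v₀ : V) (N : ℕ) (hN : 1 ≤ N)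
    (u : ℕ → Ω → U) (v : ℕ → Ω → V) (ghat : ℕ → Ω → V)
    (hu0 : ∀ ω, u 0 ω = u₀) (hv0 : ∀ ω, v 0 ω = v₀)
    (η₂ σ₂ : ℝ) (hη₂ : 0 < η₂) (hstep : η₂ ≤ 1 / L₂)
    (hupd : ∀ t < N, ∀ ω, v (t + 1) ω = v t ω - η₂ • ghat t ω)
    (𝒢 : ℕ → MeasurableSpace Ω) (h𝒢 : ∀ t < N, 𝒢 t ≤ m0)
    (hintg : ∀ t < N, Integrable (ghat t) μ)
    (hunbiased : ∀ t < N,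
      μ[ghat t | 𝒢 t] =ᵐ[μ] fun ω => gradient (T (u (t + 1) ω)) (v t ω))
    (hvar : ∀ t < N, ∀ᵐ ω ∂μ,
      (μ[(fun ω' => ‖ghat t ω' - gradient (T (u (t + 1) ω')) (v t ω')‖ ^ 2) | 𝒢 t]) ω
        ≤ σ₂ ^ 2)
    (hint1 : ∀ t ≤ N, Integrable (fun ω => T (u t ω) (v t ω)) μ)
    (hint2 : ∀ t < N, Integrable (fun ω => T (u (t + 1) ω) (v t ω)) μ)
    (hint3 : ∀ t < N,
      Integrable (fun ω => ‖gradient (T (u (t + 1) ω)) (v t ω)‖ ^ 2) μ)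
    (hint4 : ∀ t < N, Integrable (fun ω => ‖ghat t ω‖ ^ 2) μ) :
    (1 / (N : ℝ)) *
        ∑ t ∈ Finset.range N, ∫ ω, ‖gradient (T (u (t + 1) ω)) (v t ω)‖ ^ 2 ∂μ ≤
      2 * (T u₀ v₀ - Tinf
            + ∑ t ∈ Finset.range N,
                ∫ ω, |T (u (t + 1) ω) (v t ω) - T (u t ω) (v t ω)| ∂μ) / (η₂ * N)
        + L₂ * η₂ * σ₂ ^ 2 := by
  have hLη : L₂ * η₂ ≤ 1 := by rwa [le_div_iff₀ hL₂, mul_comm] at hstep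
  have hI0 : ∫ ω, T (u 0 ω) (v 0 ω) ∂μ = T u₀ v₀ := by simp [hu0, hv0]
  have hlow : Tinf ≤ ∫ ω, T (u N ω) (v N ω) ∂μ := by
    simpa using integral_mono (integrable_const Tinf) (hint1 N le_rfl) fun ω => hbdd _ _
  rw [← hI0]
  refine average_le_of_telescoping_descent (I := fun t => ∫ ω, T (u t ω) (v t ω) ∂μ)
    hN hη₂ hlow fun t ht => ?_
  have hdrift : ∫ ω, T (u (t + 1) ω) (v t ω) ∂μ ≤ ∫ ω, T (u t ω) (v t ω) ∂μ
      + ∫ ω, |T (u (t + 1) ω) (v t ω) - T (u t ω) (v t ω)| ∂μ := by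
    have := (le_abs_self _).trans (abs_integral_le_integral_abs (μ := μ)
      (f := fun ω => T (u (t + 1) ω) (v t ω) - T (u t ω) (v t ω)))
    rw [integral_sub (hint2 t ht) (hint1 t ht.le)] at this
    linarith
  have hnext : (fun ω => T (u (t + 1) ω) (v (t + 1) ω))
      = fun ω => T (u (t + 1) ω) (v t ω - η₂ • ghat t ω) := funext fun ω => by rw [hupd t ht ω]
  have hsgd := integral_sgd_step_le (h𝒢 t ht) hL₂.le hη₂.le hLη (fun ω => hdiff _)
    (fun ω => hlip _) (hintg t ht).aestronglyMeasurable (hunbiased t ht) (hvar t ht)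
    (hint2 t ht) (hnext ▸ hint1 (t + 1) ht) (hint3 t ht) (hint4 t ht)
  rw [hnext]
  linarith

/-- **Task-branch descent with interface drift.**
Let `U, V` be separable real Hilbert spaces and `T : U × V → ℝ` bounded below by `T_inf`
and, for each fixed `u`, differentiable in `v` with `L₂`-Lipschitz partial gradient
(uniformly in `u`).  Let `u₀, v₀` be deterministic and `(u_t), (v_t), (ĝ_t)` processes
with `v_{t+1} = v_t − η₂ ĝ_t`, `0 < η₂ ≤ 1/L₂`, where for each `t < N` there is a
sub-σ-algebra `𝓖_t` making `u_{t+1}` and `v_t` strongly measurable, with unbiased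
stochastic gradients of conditional variance at most `σ₂²`, and the listed integrability
conditions.  With `Γ_N := Σ_{t<N} E[|T(u_{t+1}, v_t) − T(u_t, v_t)|]`, for `N ≥ 1`:
`(1/N) Σ_{t<N} E[‖∇_v T(u_{t+1}, v_t)‖²] ≤ 2 (T(u₀,v₀) − T_inf + Γ_N)/(η₂ N) + L₂ η₂ σ₂²`. -/
theorem lopt_task_descent_interface_drift
    {U V : Type*}
    [NormedAddCommGroup U] [InnerProductSpace ℝ U]
    [CompleteSpace U] [SecondCountableTopology U]
    [NormedAddCommGroup V] [InnerProductSpace ℝ V]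
    [CompleteSpace V] [SecondCountableTopology V]
    {Ω : Type*} {m0 : MeasurableSpace Ω}
    (μ : @MeasureTheory.Measure Ω m0) [IsProbabilityMeasure μ]
    (T : U → V → ℝ) (L₂ Tinf : ℝ) (hL₂ : 0 < L₂)
    (hdiff : ∀ u : U, Differentiable ℝ (T u))
    (hlip : ∀ (u : U) (v v' : V),
      ‖gradient (T u) v - gradient (T u) v'‖ ≤ L₂ * ‖v - v'‖)
    (hbdd : ∀ (u : U) (v : V), Tinf ≤ T u v)
    (u₀ : U) (v₀ : V) (N : ℕ) (hN : 1 ≤ N)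
    (u : ℕ → Ω → U) (v : ℕ → Ω → V) (ghat : ℕ → Ω → V)
    (hu0 : ∀ ω, u 0 ω = u₀) (hv0 : ∀ ω, v 0 ω = v₀)
    (η₂ σ₂ : ℝ) (hη₂ : 0 < η₂) (hstep : η₂ ≤ 1 / L₂)
    (hupd : ∀ t < N, ∀ ω, v (t + 1) ω = v t ω - η₂ • ghat t ω)
    (𝒢 : ℕ → MeasurableSpace Ω) (h𝒢 : ∀ t < N, 𝒢 t ≤ m0)
    (hmeasu : ∀ t < N, StronglyMeasurable[𝒢 t] (u (t + 1)))
    (hmeasv : ∀ t < N, StronglyMeasurable[𝒢 t] (v t))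
    (hintg : ∀ t < N, Integrable (ghat t) μ)
    (hunbiased : ∀ t < N,
      μ[ghat t | 𝒢 t] =ᵐ[μ] fun ω => gradient (T (u (t + 1) ω)) (v t ω))
    (hvar : ∀ t < N, ∀ᵐ ω ∂μ,
      (μ[(fun ω' => ‖ghat t ω' - gradient (T (u (t + 1) ω')) (v t ω')‖ ^ 2) | 𝒢 t]) ω
        ≤ σ₂ ^ 2)
    (hint1 : ∀ t ≤ N, Integrable (fun ω => T (u t ω) (v t ω)) μ)
    (hint2 : ∀ t < N, Integrable (fun ω => T (u (t + 1) ω) (v t ω)) μ)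
    (hint3 : ∀ t < N,
      Integrable (fun ω => ‖gradient (T (u (t + 1) ω)) (v t ω)‖ ^ 2) μ)
    (hint4 : ∀ t < N, Integrable (fun ω => ‖ghat t ω‖ ^ 2) μ) :
    (1 / (N : ℝ)) *
        ∑ t ∈ Finset.range N, ∫ ω, ‖gradient (T (u (t + 1) ω)) (v t ω)‖ ^ 2 ∂μ ≤
      2 * (T u₀ v₀ - Tinf
            + ∑ t ∈ Finset.range N,
                ∫ ω, |T (u (t + 1) ω) (v t ω) - T (u t ω) (v t ω)| ∂μ) / (η₂ * N)
        + L₂ * η₂ * σ₂ ^ 2 :=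
  lopt_task_descent_interface_drift_general μ T L₂ Tinf hL₂ hdiff hlip hbdd u₀ v₀ N hN u v ghat hu0
    hv0 η₂ σ₂ hη₂ hstep hupd 𝒢 h𝒢 hintg hunbiased hvar hint1 hint2 hint3 hint4
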